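/- Let f be a drift function with primitive G(x) = ∫₀ˣ (1/f)(y) dy and inverse H of G on G(ℝ) = (G(−∞), G(+∞)). Let b : ℝ → ℝ be measurable and set σ = (b/f) ∘ H on G(ℝ). Then for every open set U ⊆ G(ℝ), ∫_U σ(y)⁻² dy = ∫_{H(U)} b(y)⁻² f(y) dy. -/

import Mathlib

/-!
`G = primInv f` is the primitive of the locally integrable density `1/f`, hence continuous, and it
is injective because `H` inverts it; so `G` is a continuous strictly increasing map which pushes the
measure `ν = (1/f) dx` forward to Lebesgue measure on `G(ℝ)` (the two agree on the intervals
`G(Ioc a b) = Ioc (G a) (G b)`). Substituting `y = G x` on `U` turns the left-hand side into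
`∫_{G⁻¹(U)} (1/f) · f² / b² dx`, and `G⁻¹(U) = H(U)`.
-/

open MeasureTheory

/-- The primitive `G(x) = ∫₀ˣ (1/f)(y) dy` of the reciprocal of a drift
function `f` (with the convention `1/0 = ∞`). -/
noncomputable def primInv (f : ℝ → ℝ) (x : ℝ) : ℝ :=
  (∫⁻ y in Set.Ioc 0 x, (ENNReal.ofReal (f y))⁻¹ ∂volume).toReal -
    (∫⁻ y in Set.Ioc x 0, (ENNReal.ofReal (f y))⁻¹ ∂volume).toReal

open Set
open scoped ENNReal

theorem LocallyBoundedVariationOn.measurable {α : Type*} [LinearOrder α] [TopologicalSpace α]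
    [OrderClosedTopology α] [MeasurableSpace α] [BorelSpace α] {f : α → ℝ}
    (hf : LocallyBoundedVariationOn f univ) : Measurable f := by
  obtain ⟨p, q, hp, hq, rfl⟩ := hf.exists_monotoneOn_sub_monotoneOn
  exact (monotoneOn_univ.1 hp).measurable.sub (monotoneOn_univ.1 hq).measurable

theorem StrictMono.image_Ioc_of_continuous {α δ : Type*} [ConditionallyCompleteLinearOrder α]
    [TopologicalSpace α] [OrderTopology α] [DenselyOrdered α] [LinearOrder δ] [TopologicalSpace δ]
    [OrderClosedTopology δ] {G : α → δ} (hG : Continuous G) (hmono : StrictMono G)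
    {a b : α} (hab : a ≤ b) : G '' Ioc a b = Ioc (G a) (G b) :=
  (hmono.image_Ioc_subset).antisymm (intermediate_value_Ioc hab hG.continuousOn)

theorem map_eq_volume_restrict_range {ν : Measure ℝ} {G : ℝ → ℝ} (hG : Continuous G)
    (hmono : StrictMono G) (hν : ∀ a b, a ≤ b → ν (Ioc a b) = ENNReal.ofReal (G b - G a)) :
    ν.map G = volume.restrict (range G) := by
  have hemb : MeasurableEmbedding G := hG.measurableEmbedding hmono.injective
  have hν_comap : ν = volume.comap G := by
    refine Measure.ext_of_Ioc' _ _ (fun a b hab => ?_) (fun a b hab => ?_)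
    · rw [hν a b hab.le]
      exact ENNReal.ofReal_ne_top
    · rw [hemb.comap_apply, hmono.image_Ioc_of_continuous hG hab.le, Real.volume_Ioc,
        hν a b hab.le]
  rw [hν_comap, hemb.map_comap]

theorem MeasurableEmbedding.setLIntegral_eq_of_map_eq_restrict_range {α β : Type*}
    [MeasurableSpace α] [MeasurableSpace β] {ν : Measure α} {μ : Measure β} {G : α → β}
    (hemb : MeasurableEmbedding G) (hmap : ν.map G = μ.restrict (range G)) {U : Set β}
    (hU : MeasurableSet U) (hUr : U ⊆ range G) (φ : β → ℝ≥0∞) :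
    ∫⁻ y in U, φ y ∂μ = ∫⁻ x in G ⁻¹' U, φ (G x) ∂ν := by
  rw [← hemb.lintegral_map, ← hemb.restrict_map, hmap, Measure.restrict_restrict hU,
    inter_eq_left.2 hUr]

theorem Function.LeftInverse.preimage_eq_image {α β : Type*} {G : α → β} {H : β → α}
    (hH : Function.LeftInverse H G) {U : Set β} (hUr : U ⊆ range G) : G ⁻¹' U = H '' U := by
  refine Subset.antisymm (fun x hx => ⟨G x, hx, hH x⟩) ?_
  rintro _ ⟨y, hy, rfl⟩
  obtain ⟨t, rfl⟩ := hUr hy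
  rwa [mem_preimage, hH]

section LocallyFiniteDensity

variable {d : ℝ → ℝ≥0∞} (hd : Measurable d)
  (hfin : ∀ K : Set ℝ, IsCompact K → ∫⁻ x in K, d x < ⊤)
include hfin

theorem setLIntegral_Ioc_ne_top (a b : ℝ) : ∫⁻ x in Ioc a b, d x ≠ ⊤ :=
  ((lintegral_mono_set Ioc_subset_Icc_self).trans_lt (hfin _ isCompact_Icc)).ne

include hd

theorem integral_Ioc_toReal (a b : ℝ) :
    ∫ x in Ioc a b, (d x).toReal = (∫⁻ x in Ioc a b, d x).toReal :=
  integral_toReal hd.aemeasurable (ae_lt_top hd (setLIntegral_Ioc_ne_top hfin a b))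

theorem intervalIntegrable_toReal (a b : ℝ) :
    IntervalIntegrable (fun x => (d x).toReal) volume a b :=
  IntegrableOn.intervalIntegrable <|
    integrable_toReal_of_lintegral_ne_top hd.aemeasurable (hfin _ isCompact_uIcc).ne

theorem intervalIntegral_toReal_eq {a b : ℝ} (hab : a ≤ b) :
    ENNReal.ofReal (∫ x in a..b, (d x).toReal) = ∫⁻ x in Ioc a b, d x := by
  rw [intervalIntegral.integral_of_le hab, integral_Ioc_toReal hd hfin,
    ENNReal.ofReal_toReal (setLIntegral_Ioc_ne_top hfin a b)]

end LocallyFiniteDensity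

section primInv

variable {f : ℝ → ℝ} (hd : Measurable fun x => (ENNReal.ofReal (f x))⁻¹)
  (hint : ∀ K : Set ℝ, IsCompact K → ∫⁻ x in K, (ENNReal.ofReal (f x))⁻¹ ∂volume < ⊤)
include hd hint

theorem primInv_eq_intervalIntegral (x : ℝ) :
    primInv f x = ∫ y in 0..x, ((ENNReal.ofReal (f y))⁻¹).toReal := by
  rw [primInv, intervalIntegral, integral_Ioc_toReal hd hint, integral_Ioc_toReal hd hint]

theorem continuous_primInv : Continuous (primInv f) := by
  simpa only [← funext (primInv_eq_intervalIntegral hd hint)] using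
    intervalIntegral.continuous_primitive (intervalIntegrable_toReal hd hint) 0

theorem primInv_sub_primInv (a b : ℝ) :
    primInv f b - primInv f a = ∫ x in a..b, ((ENNReal.ofReal (f x))⁻¹).toReal := by
  rw [primInv_eq_intervalIntegral hd hint, primInv_eq_intervalIntegral hd hint,
    intervalIntegral.integral_interval_sub_left (intervalIntegrable_toReal hd hint 0 b)
      (intervalIntegrable_toReal hd hint 0 a)]

theorem monotone_primInv : Monotone (primInv f) := fun a b hab =>
  sub_nonneg.1 <| primInv_sub_primInv hd hint a b ▸
    intervalIntegral.integral_nonneg hab fun _ _ => ENNReal.toReal_nonneg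

theorem ofReal_primInv_sub_primInv {a b : ℝ} (hab : a ≤ b) :
    ENNReal.ofReal (primInv f b - primInv f a) =
      volume.withDensity (fun x => (ENNReal.ofReal (f x))⁻¹) (Ioc a b) := by
  rw [primInv_sub_primInv hd hint, intervalIntegral_toReal_eq hd hint hab,
    withDensity_apply _ measurableSet_Ioc]

end primInv

theorem ENNReal.inv_mul_mul_sq {x : ℝ≥0∞} (hx : x ≠ ⊤) (c : ℝ≥0∞) :
    x⁻¹ * (c * x ^ 2) = c * x := by
  rcases eq_or_ne x 0 with rfl | hx0
  · simp
  · rw [mul_left_comm, sq, ← mul_assoc x⁻¹, ENNReal.inv_mul_cancel hx0 hx, one_mul]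

/-- `σ(y)⁻²` is encoded as `f(H y)² / b(H y)²` and `b⁻² f` as `f / b²` in `[0,∞]`, with the
conventions `1/0 = ∞`, `0·∞ = 0`. -/
theorem lintegral_sigma_inv_sq_eq_general
    (f : ℝ → ℝ) (hnn : ∀ x, 0 ≤ f x)
    (hbv : LocallyBoundedVariationOn f Set.univ)
    (hint : ∀ K : Set ℝ, IsCompact K →
      ∫⁻ x in K, (ENNReal.ofReal (f x))⁻¹ ∂volume < ⊤)
    (b : ℝ → ℝ) (hb : Measurable b)
    (H : ℝ → ℝ) (hH : ∀ t, H (primInv f t) = t) :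
    ∀ U : Set ℝ, IsOpen U → U ⊆ Set.range (primInv f) →
      ∫⁻ y in U,
          (ENNReal.ofReal (b (H y) ^ 2))⁻¹ * ENNReal.ofReal (f (H y) ^ 2) ∂volume
        = ∫⁻ y in H '' U,
            (ENNReal.ofReal (b y ^ 2))⁻¹ * ENNReal.ofReal (f y) ∂volume := by
  intro U hU hUr
  set G := primInv f
  have hf : Measurable f := hbv.measurable
  have hd : Measurable fun x => (ENNReal.ofReal (f x))⁻¹ := hf.ennreal_ofReal.inv
  have hG : Continuous G := continuous_primInv hd hint
  have hmono : StrictMono G :=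
    (monotone_primInv hd hint).strictMono_of_injective (Function.LeftInverse.injective hH)
  have hemb : MeasurableEmbedding G := hG.measurableEmbedding hmono.injective
  have hmap : (volume.withDensity fun x => (ENNReal.ofReal (f x))⁻¹).map G =
      volume.restrict (range G) :=
    map_eq_volume_restrict_range hG hmono fun _ _ hab =>
      (ofReal_primInv_sub_primInv hd hint hab).symm
  have hUG : MeasurableSet (G ⁻¹' U) := hG.measurable hU.measurableSet
  rw [hemb.setLIntegral_eq_of_map_eq_restrict_range hmap hU.measurableSet hUr,
    (Function.LeftInverse.preimage_eq_image hH hUr).symm]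
  have hφ : Measurable fun x => (ENNReal.ofReal (b x ^ 2))⁻¹ * ENNReal.ofReal (f x ^ 2) := by
    fun_prop
  simp only [hH]
  rw [setLIntegral_withDensity_eq_setLIntegral_mul _ hd hφ hUG]
  refine setLIntegral_congr_fun hUG fun x _ => ?_
  rw [Pi.mul_apply, ENNReal.ofReal_pow (hnn x), ENNReal.inv_mul_mul_sq ENNReal.ofReal_ne_top]

/-- With `σ = (b/f) ∘ H`, where `H` is the inverse of `G = primInv f` on
`G(ℝ)`, for every open `U ⊆ G(ℝ)` one has
`∫_U σ(y)⁻² dy = ∫_{H(U)} b(y)⁻² f(y) dy`.  Here `σ(y)⁻²` is interpreted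
as `f(H(y))² / b(H(y))²` and `b⁻² f` as `f/b²` in `[0,∞]`, with the paper's
conventions `1/0 = ∞`, `0·∞ = 0`. -/
theorem lintegral_sigma_inv_sq_eq
    (f : ℝ → ℝ) (hnn : ∀ x, 0 ≤ f x)
    (hrc : ∀ x, ContinuousWithinAt f (Set.Ici x) x)
    (hbv : LocallyBoundedVariationOn f Set.univ)
    (hint : ∀ K : Set ℝ, IsCompact K →
      ∫⁻ x in K, (ENNReal.ofReal (f x))⁻¹ ∂volume < ⊤)
    (b : ℝ → ℝ) (hb : Measurable b)
    (H : ℝ → ℝ) (hH : ∀ t, H (primInv f t) = t) :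
    ∀ U : Set ℝ, IsOpen U → U ⊆ Set.range (primInv f) →
      ∫⁻ y in U,
          (ENNReal.ofReal (b (H y) ^ 2))⁻¹ * ENNReal.ofReal (f (H y) ^ 2) ∂volume
        = ∫⁻ y in H '' U,
            (ENNReal.ofReal (b y ^ 2))⁻¹ * ENNReal.ofReal (f y) ∂volume :=
  lintegral_sigma_inv_sq_eq_general f hnn hbv hint b hb H hH
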